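/- Let r, n ≥ 1 and let λ_j^k (1 ≤ j ≤ n, 1 ≤ k ≤ r) be real numbers. Then the following are equivalent: (c) there exist invertible real r×r matrices A_1, …, A_n with A_1 ⋯ A_n = I such that for each j the eigenvalues of A_j A_jᵀ, counted with multiplicity, are exp(λ_j^1), …, exp(λ_j^r); (c') there exist real r×r matrices L_1, …, L_n, each upper triangular with positive diagonal entries, with L_1 ⋯ L_n = I, such that for each j the eigenvalues of L_j L_jᵀ, counted with multiplicity, are exp(λ_j^1), …, exp(λ_j^r). -/

import Mathlib

open Matrix

/-- A real square matrix is upper triangular with positive diagonal entries,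
i.e. it is an element of the fixed point set `(AN)^σ` of the Iwasawa subgroup
`AN ⊂ GL(r, ℂ)` under complex conjugation. -/
def UpperTriangularPosDiagReal {r : ℕ} (M : Matrix (Fin r) (Fin r) ℝ) : Prop :=
  (∀ i j : Fin r, j < i → M i j = 0) ∧ ∀ i : Fin r, 0 < M i i

namespace MSVP

open Polynomial

variable {r : ℕ}

lemma posDef_conj {S B : Matrix (Fin r) (Fin r) ℝ} (hS : S.PosDef) (hB : IsUnit B) :
    (B * S * Bᵀ).PosDef := by
  rw [posDef_iff_dotProduct_mulVec]
  constructor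
  · have h1 : Sᵀ = S := by
      have := hS.1
      rwa [IsHermitian, conjTranspose_eq_transpose_of_trivial] at this
    rw [IsHermitian, conjTranspose_eq_transpose_of_trivial]
    rw [transpose_mul, transpose_mul, transpose_transpose, h1, Matrix.mul_assoc]
  · intro x hx
    have hBt : IsUnit Bᵀ := (Matrix.isUnit_transpose _).mpr hB
    have hy : Bᵀ *ᵥ x ≠ 0 := by
      intro h
      apply hx
      have hinj := Matrix.mulVec_injective_iff_isUnit.mpr hBt
      have : Bᵀ *ᵥ x = Bᵀ *ᵥ 0 := by simpa [Matrix.mulVec_zero] using h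
      exact hinj this
    have hpos := (posDef_iff_dotProduct_mulVec.mp hS).2 hy
    rw [star_trivial] at hpos
    have key : star x ⬝ᵥ ((B * S * Bᵀ) *ᵥ x) = (Bᵀ *ᵥ x) ⬝ᵥ (S *ᵥ (Bᵀ *ᵥ x)) := by
      rw [star_trivial, ← Matrix.mulVec_mulVec, ← Matrix.mulVec_mulVec,
        Matrix.dotProduct_mulVec x B, ← Matrix.mulVec_transpose]
    rw [key]
    exact hpos

lemma posDef_mul_transpose_self {M : Matrix (Fin r) (Fin r) ℝ} (hM : IsUnit M) :
    (M * Mᵀ).PosDef := by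
  have := posDef_conj (Matrix.PosDef.one (n := Fin r) (R := ℝ)) hM
  simpa using this

lemma exists_cholesky {S : Matrix (Fin r) (Fin r) ℝ} (hS : S.PosDef) :
    ∃ T : Matrix (Fin r) (Fin r) ℝ, UpperTriangularPosDiagReal T ∧ T * Tᵀ = S := by
  haveI : WellFoundedLT (Fin r)ᵒᵈ := Finite.to_wellFoundedLT
  have hS' : (S : Matrix (Fin r)ᵒᵈ (Fin r)ᵒᵈ ℝ).PosDef := hS
  set M : Matrix (Fin r) (Fin r) ℝ := @LDL.lowerInv ℝ _ (Fin r)ᵒᵈ _ _ _ S _ hS' with hM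
  set d : Fin r → ℝ := @LDL.diagEntries ℝ _ (Fin r)ᵒᵈ _ _ _ S _ hS' with hd
  have hdiag0 := @LDL.diag_eq_lowerInv_conj ℝ _ (Fin r)ᵒᵈ _ _ _ S _ hS'
  unfold LDL.diag at hdiag0
  have hdiagonal : (@diagonal (Fin r)ᵒᵈ ℝ _ _ d : Matrix (Fin r) (Fin r) ℝ) = diagonal d := by
    congr!
  have hdiag : diagonal d = M * S * Mᵀ := by
    rw [← hdiagonal, ← conjTranspose_eq_transpose_of_trivial]
    exact hdiag0
  haveI hMinvDual := @LDL.invertibleLowerInv ℝ _ (Fin r)ᵒᵈ _ _ _ S _ hS'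
  have hone : (1 : Matrix (Fin r)ᵒᵈ (Fin r)ᵒᵈ ℝ) = (1 : Matrix (Fin r) (Fin r) ℝ) := by
    ext i j
    by_cases h : i = j
    · subst h
      trans (1 : ℝ)
      · exact Matrix.one_apply_eq (n := (Fin r)ᵒᵈ) i
      · exact (Matrix.one_apply_eq (n := Fin r) i).symm
    · trans (0 : ℝ)
      · exact Matrix.one_apply_ne (n := (Fin r)ᵒᵈ) h
      · exact (Matrix.one_apply_ne (n := Fin r) h).symm
  haveI : Invertible M := by
    obtain ⟨N, hN1, hN2⟩ := hMinvDual
    exact ⟨N, hN1.trans hone, hN2.trans hone⟩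
  have hMunit : IsUnit M := isUnit_of_invertible M
  have hMdet : IsUnit M.det := Matrix.isUnit_iff_isUnit_det M |>.mp hMunit
  have hMtri : M.BlockTriangular id := by
    intro i j hij
    exact @LDL.lowerInv_triangular ℝ _ (Fin r)ᵒᵈ _ _ _ S _ hS' i j hij
  have hMinvtri : M⁻¹.BlockTriangular id := blockTriangular_inv_of_blockTriangular hMtri
  have hdpos : ∀ i, 0 < d i := by
    have : (diagonal d).PosDef := by
      rw [hdiag]; exact posDef_conj hS hMunit
    exact (posDef_diagonal_iff).mp this
  set e : Fin r → ℝ := fun i => Real.sqrt (d i) with he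
  have hepos : ∀ i, 0 < e i := fun i => Real.sqrt_pos.mpr (hdpos i)
  set T0 : Matrix (Fin r) (Fin r) ℝ := M⁻¹ * diagonal e with hT0
  have hT0tri : T0.BlockTriangular id := hMinvtri.mul (blockTriangular_diagonal e)
  have hT0mul : T0 * T0ᵀ = S := by
    rw [hT0, transpose_mul, transpose_nonsing_inv, diagonal_transpose]
    have : M⁻¹ * diagonal e * (diagonal e * Mᵀ⁻¹) =
        M⁻¹ * (diagonal e * diagonal e) * Mᵀ⁻¹ := by
      noncomm_ring
    rw [this, diagonal_mul_diagonal]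
    have hee : (fun i => e i * e i) = d := by
      funext i
      exact Real.mul_self_sqrt (hdpos i).le
    rw [hee]
    rw [hdiag]
    have hMt : IsUnit Mᵀ.det := by rwa [Matrix.det_transpose]
    calc M⁻¹ * (M * S * Mᵀ) * Mᵀ⁻¹
        = (M⁻¹ * M) * S * (Mᵀ * Mᵀ⁻¹) := by noncomm_ring
      _ = S := by rw [Matrix.nonsing_inv_mul _ hMdet, Matrix.mul_nonsing_inv _ hMt,
            Matrix.one_mul, Matrix.mul_one]
  have hT0det : IsUnit T0.det := by
    have : T0.det * T0ᵀ.det = S.det := by rw [← Matrix.det_mul, hT0mul]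
    rw [Matrix.det_transpose] at this
    have hSdet : S.det ≠ 0 := ne_of_gt hS.det_pos
    have : T0.det ≠ 0 := by
      intro h; rw [h, zero_mul] at this; exact hSdet this.symm
    exact this.isUnit
  have hT0diag : ∀ i, T0 i i ≠ 0 := by
    intro i hzero
    have hdet := Matrix.det_of_upperTriangular hT0tri
    rw [hdet] at hT0det
    have := hT0det.ne_zero
    apply this
    exact Finset.prod_eq_zero (Finset.mem_univ i) hzero
  set E : Matrix (Fin r) (Fin r) ℝ := diagonal (fun i => if 0 < T0 i i then (1 : ℝ) else -1)
    with hE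
  refine ⟨T0 * E, ⟨?_, ?_⟩, ?_⟩
  · intro i j hij
    exact (hT0tri.mul (blockTriangular_diagonal _)) (by exact hij)
  · intro i
    rw [Matrix.mul_diagonal]
    by_cases h : 0 < T0 i i
    · simpa [h] using h
    · simp only [h, if_false, mul_neg, mul_one]
      have : T0 i i < 0 := lt_of_le_of_ne (not_lt.mp h) (hT0diag i)
      linarith
  · have hEE : E * Eᵀ = 1 := by
      rw [hE, diagonal_transpose, diagonal_mul_diagonal]
      ext i j
      by_cases h : i = j
      · subst h
        by_cases h2 : 0 < T0 i i <;> simp [h2]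
      · simp [Matrix.diagonal_apply_ne _ h, Matrix.one_apply_ne h]
    rw [transpose_mul, Matrix.mul_assoc, ← Matrix.mul_assoc E, hEE, Matrix.one_mul, hT0mul]

lemma perm_of_multiset_eq {f g : Fin r → ℝ}
    (h : Multiset.map f Finset.univ.val = Multiset.map g Finset.univ.val) :
    ∃ σ : Equiv.Perm (Fin r), ∀ k, g k = f (σ k) := by
  have hperm : ∀ (u : Fin r → ℝ) (τ : Equiv.Perm (Fin r)),
      Multiset.map (u ∘ τ) Finset.univ.val = Multiset.map u Finset.univ.val := by
    intro u τ
    have huniv : (Finset.univ.map τ.toEmbedding) = Finset.univ := Finset.map_univ_equiv τ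
    calc Multiset.map (u ∘ τ) Finset.univ.val
        = Multiset.map u (Multiset.map τ Finset.univ.val) := by
          rw [Multiset.map_map]
      _ = Multiset.map u (Finset.univ.map τ.toEmbedding).val := by
          rw [Finset.map_val]; rfl
      _ = Multiset.map u Finset.univ.val := by rw [huniv]
  have hofFn : ∀ (u : Fin r → ℝ),
      (↑(List.ofFn u) : Multiset ℝ) = Multiset.map u Finset.univ.val := by
    intro u
    rw [List.ofFn_eq_map]
    rfl
  set σf := Tuple.sort f
  set σg := Tuple.sort g
  have hsorted_eq : f ∘ σf = g ∘ σg := by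
    apply List.ofFn_injective
    refine List.Perm.eq_of_sortedLE
      ((Tuple.monotone_sort f).sortedLE_ofFn) ((Tuple.monotone_sort g).sortedLE_ofFn) ?_
    rw [← Multiset.coe_eq_coe, hofFn, hofFn, hperm, hperm, h]
  refine ⟨σg.symm.trans σf, fun k => ?_⟩
  have hk := congrFun hsorted_eq (σg.symm k)
  simp only [Function.comp_apply] at hk
  rw [Equiv.apply_symm_apply] at hk
  simp only [Equiv.trans_apply]
  exact hk.symm

lemma charpoly_conj {Q A : Matrix (Fin r) (Fin r) ℝ} (hQ : Q * Qᵀ = 1) :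
    (Q * A * Qᵀ).charpoly = A.charpoly := by
  have hQc : (Q.map C) * (Q.map C)ᵀ = (1 : Matrix (Fin r) (Fin r) ℝ[X]) := by
    have := congrArg (Matrix.map · (C : ℝ → ℝ[X])) hQ
    simpa [Matrix.map_mul, Matrix.transpose_map, Matrix.map_one] using this
  have hmap : charmatrix (Q * A * Qᵀ) = (Q.map C) * charmatrix A * (Q.map C)ᵀ := by
    unfold charmatrix
    rw [Matrix.mul_sub, Matrix.sub_mul]
    congr 1
    · rw [(Matrix.scalar_commute X (fun m => Commute.all X m) (Q.map C)).symm.eq,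
        Matrix.mul_assoc, hQc, Matrix.mul_one]
    · simp only [RingHom.mapMatrix_apply]
      rw [Matrix.map_mul, Matrix.map_mul, Matrix.transpose_map]
  rw [Matrix.charpoly, Matrix.charpoly, hmap, Matrix.det_mul, Matrix.det_mul]
  have h1 : (Q.map C).det * (Q.map C)ᵀ.det = 1 := by
    rw [← Matrix.det_mul, hQc, Matrix.det_one]
  calc (Q.map C).det * (charmatrix A).det * (Q.map C)ᵀ.det
      = ((Q.map C).det * (Q.map C)ᵀ.det) * (charmatrix A).det := by ring
    _ = (charmatrix A).det := by rw [h1, one_mul]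

lemma charpoly_eq_prod_eig {A : Matrix (Fin r) (Fin r) ℝ} (hA : A.IsHermitian) :
    A.charpoly = ∏ i : Fin r, (X - C (hA.eigenvalues i)) := by
  have hsp := hA.spectral_theorem
  set V : Matrix (Fin r) (Fin r) ℝ := (hA.eigenvectorUnitary : Matrix (Fin r) (Fin r) ℝ) with hV
  have hVo : V * Vᵀ = 1 := by
    have := (Matrix.mem_unitaryGroup_iff).mp hA.eigenvectorUnitary.2
    rwa [← conjTranspose_eq_transpose_of_trivial]
  have hdiag : (RCLike.ofReal ∘ hA.eigenvalues : Fin r → ℝ) = hA.eigenvalues := by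
    funext i; simp [RCLike.ofReal_real_eq_id]
  have hstar : (star V : Matrix (Fin r) (Fin r) ℝ) = Vᵀ := by
    rw [Matrix.star_eq_conjTranspose, conjTranspose_eq_transpose_of_trivial]
  rw [Unitary.conjStarAlgAut_apply] at hsp
  rw [hdiag, hstar] at hsp
  conv_lhs => rw [hsp]
  rw [charpoly_conj hVo, Matrix.charpoly_of_upperTriangular _ (blockTriangular_diagonal _)]
  congr 1
  funext i
  rw [Matrix.diagonal_apply_eq]

lemma eig_perm_of_conj {A B Q : Matrix (Fin r) (Fin r) ℝ} (hQ : Q * Qᵀ = 1)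
    (hBA : B = Q * A * Qᵀ) (hA : A.IsHermitian) (hB : B.IsHermitian) :
    ∃ τ : Equiv.Perm (Fin r), ∀ k, hB.eigenvalues k = hA.eigenvalues (τ k) := by
  have hcp : B.charpoly = A.charpoly := by rw [hBA]; exact charpoly_conj hQ
  rw [charpoly_eq_prod_eig hA, charpoly_eq_prod_eig hB] at hcp
  have hroots : ∀ (u : Fin r → ℝ),
      (∏ i : Fin r, (X - C (u i))).roots = Multiset.map u Finset.univ.val := by
    intro u
    rw [Finset.prod_eq_multiset_prod,
      show (fun i => X - C (u i)) = (fun a => X - C a) ∘ u from rfl, ← Multiset.map_map]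
    exact Polynomial.roots_multiset_prod_X_sub_C _
  have := congrArg Polynomial.roots hcp
  rw [hroots, hroots] at this
  exact perm_of_multiset_eq this.symm

lemma utpd_one : UpperTriangularPosDiagReal (1 : Matrix (Fin r) (Fin r) ℝ) := by
  constructor
  · intro i j hij
    exact Matrix.one_apply_ne (Ne.symm (ne_of_lt hij))
  · intro i
    rw [Matrix.one_apply_eq]
    norm_num

lemma utpd_mul {A B : Matrix (Fin r) (Fin r) ℝ} (hA : UpperTriangularPosDiagReal A)
    (hB : UpperTriangularPosDiagReal B) : UpperTriangularPosDiagReal (A * B) := by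
  constructor
  · intro i j hij
    rw [Matrix.mul_apply]
    apply Finset.sum_eq_zero
    intro k _
    rcases lt_or_ge k i with hk | hk
    · rw [hA.1 i k hk, zero_mul]
    · have : j < k := lt_of_lt_of_le hij hk
      rw [hB.1 k j this, mul_zero]
  · intro i
    rw [Matrix.mul_apply]
    have hsum : ∑ k, A i k * B k i = A i i * B i i := by
      apply Finset.sum_eq_single_of_mem i (Finset.mem_univ i)
      intro k _ hk
      rcases lt_or_gt_of_ne hk with hlt | hgt
      · rw [hA.1 i k hlt, zero_mul]
      · rw [hB.1 k i hgt, mul_zero]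
    rw [hsum]
    exact mul_pos (hA.2 i) (hB.2 i)

lemma utpd_list_prod : ∀ (l : List (Matrix (Fin r) (Fin r) ℝ)),
    (∀ M ∈ l, UpperTriangularPosDiagReal M) → UpperTriangularPosDiagReal l.prod := by
  intro l
  induction l with
  | nil => intro _; simpa using utpd_one
  | cons M t ih =>
      intro h
      rw [List.prod_cons]
      exact utpd_mul (h M List.mem_cons_self) (ih fun N hN => h N (List.mem_cons_of_mem M hN))

lemma utpd_blockTriangular {A : Matrix (Fin r) (Fin r) ℝ} (hA : UpperTriangularPosDiagReal A) :
    A.BlockTriangular id := fun i j hij => hA.1 i j hij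

lemma utpd_isUnit {A : Matrix (Fin r) (Fin r) ℝ} (hA : UpperTriangularPosDiagReal A) :
    IsUnit A := by
  rw [Matrix.isUnit_iff_isUnit_det]
  rw [Matrix.det_of_upperTriangular (utpd_blockTriangular hA)]
  exact (Finset.prod_pos fun i _ => hA.2 i).ne'.isUnit

lemma utpd_orth_eq_one {Q : Matrix (Fin r) (Fin r) ℝ} (hQ : UpperTriangularPosDiagReal Q)
    (horth : Q * Qᵀ = 1) : Q = 1 := by
  have hQu : IsUnit Q := utpd_isUnit hQ
  have hQdet : IsUnit Q.det := (Matrix.isUnit_iff_isUnit_det Q).mp hQu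
  haveI : Invertible Q := hQu.invertible
  have hinv : Q⁻¹ = Qᵀ := Matrix.inv_eq_right_inv horth
  have hinvtri : Q⁻¹.BlockTriangular id :=
    blockTriangular_inv_of_blockTriangular (utpd_blockTriangular hQ)
  rw [hinv] at hinvtri
  -- Q is diagonal
  have hoff : ∀ i j : Fin r, i ≠ j → Q i j = 0 := by
    intro i j hij
    rcases lt_or_gt_of_ne hij with hlt | hgt
    · exact hinvtri (show (j : Fin r) > i from hlt)
    · exact hQ.1 i j hgt
  have hdiag1 : ∀ i, Q i i = 1 := by
    intro i
    have h1 := congrFun (congrFun horth i) i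
    rw [Matrix.mul_apply, Matrix.one_apply_eq] at h1
    have hsum : ∑ k, Q i k * Qᵀ k i = Q i i * Q i i := by
      apply Finset.sum_eq_single_of_mem i (Finset.mem_univ i)
      intro k _ hk
      rw [show Qᵀ k i = Q i k from rfl, hoff i k (Ne.symm hk), mul_zero]
    rw [hsum] at h1
    have hpos := hQ.2 i
    nlinarith
  ext i j
  by_cases h : i = j
  · subst h; rw [hdiag1, Matrix.one_apply_eq]
  · rw [hoff i j h, Matrix.one_apply_ne h]

lemma isHermitian_mul_transpose {M : Matrix (Fin r) (Fin r) ℝ} : (M * Mᵀ).IsHermitian := by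
  rw [IsHermitian, conjTranspose_eq_transpose_of_trivial, transpose_mul, transpose_transpose]

end MSVP

open MSVP in
/-- Nonemptiness part of the homeomorphism `M_D^σ ≅ M_C^σ` of Section 4, for the
involution given by complex conjugation: the multiplicative singular value problem
has a solution by invertible real matrices iff it has a solution with all factors
real upper triangular with positive diagonal. -/
theorem multiplicative_problem_iff_AN_real (r n : ℕ) (hr : 1 ≤ r) (hn : 1 ≤ n)
    (lam : Fin n → Fin r → ℝ) :
    (∃ A : Fin n → Matrix (Fin r) (Fin r) ℝ,
        (∀ j, IsUnit (A j)) ∧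
        (List.ofFn A).prod = 1 ∧
        ∀ j, ∃ (h : (A j * (A j)ᵀ).IsHermitian) (σ : Equiv.Perm (Fin r)),
          ∀ k, h.eigenvalues k = Real.exp (lam j (σ k)))
    ↔
    (∃ L : Fin n → Matrix (Fin r) (Fin r) ℝ,
        (∀ j, UpperTriangularPosDiagReal (L j)) ∧
        (List.ofFn L).prod = 1 ∧
        ∀ j, ∃ (h : (L j * (L j)ᵀ).IsHermitian) (σ : Equiv.Perm (Fin r)),
          ∀ k, h.eigenvalues k = Real.exp (lam j (σ k))) := by
  constructor
  · rintro ⟨A, hAunit, hAprod, hAeig⟩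
    classical
    -- extend A to all of ℕ by the identity
    set A' : ℕ → Matrix (Fin r) (Fin r) ℝ :=
      fun j => if h : j < n then A ⟨j, h⟩ else 1 with hA'
    have hA'unit : ∀ j, IsUnit (A' j) := by
      intro j
      by_cases h : j < n
      · simp only [hA', dif_pos h]; exact hAunit _
      · simp only [hA', dif_neg h]; exact isUnit_one
    -- total Cholesky function
    set T : Matrix (Fin r) (Fin r) ℝ → Matrix (Fin r) (Fin r) ℝ :=
      fun S => if h : S.PosDef then (exists_cholesky h).choose else 1 with hT
    have hTspec : ∀ {S : Matrix (Fin r) (Fin r) ℝ}, S.PosDef →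
        UpperTriangularPosDiagReal (T S) ∧ T S * (T S)ᵀ = S := by
      intro S hS
      simp only [hT, dif_pos hS]
      exact (exists_cholesky hS).choose_spec
    -- recursive sequence of orthogonal matrices
    set P : ℕ → Matrix (Fin r) (Fin r) ℝ :=
      fun j => Nat.rec 1 (fun j Pj => (T ((Pj * A' j) * (Pj * A' j)ᵀ))⁻¹ * (Pj * A' j)) j
      with hP
    set L' : ℕ → Matrix (Fin r) (Fin r) ℝ :=
      fun j => T ((P j * A' j) * (P j * A' j)ᵀ) with hL'
    have hPsucc : ∀ j, P (j + 1) = (L' j)⁻¹ * (P j * A' j) := fun j => rfl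
    have hP0 : P 0 = 1 := rfl
    -- invariant: each P j is orthogonal (hence a unit)
    have hPinv : ∀ j, P j * (P j)ᵀ = 1 ∧ IsUnit (P j) := by
      intro j
      induction j with
      | zero => constructor <;> simp [hP0]
      | succ j ih =>
          have hPA : IsUnit (P j * A' j) := ih.2.mul (hA'unit j)
          have hSpd : ((P j * A' j) * (P j * A' j)ᵀ).PosDef := posDef_mul_transpose_self hPA
          obtain ⟨hLutpd, hLmul⟩ := hTspec hSpd
          have hLunit : IsUnit (L' j) := utpd_isUnit hLutpd
          have hLdet : IsUnit (L' j).det := (Matrix.isUnit_iff_isUnit_det _).mp hLunit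
          have hLtdet : IsUnit ((L' j)ᵀ).det := by rwa [Matrix.det_transpose]
          have horth : P (j + 1) * (P (j + 1))ᵀ = 1 := by
            rw [hPsucc, transpose_mul, transpose_nonsing_inv]
            calc (L' j)⁻¹ * (P j * A' j) * ((P j * A' j)ᵀ * ((L' j)ᵀ)⁻¹)
                = (L' j)⁻¹ * ((P j * A' j) * (P j * A' j)ᵀ) * ((L' j)ᵀ)⁻¹ := by
                  noncomm_ring
              _ = (L' j)⁻¹ * (L' j * (L' j)ᵀ) * ((L' j)ᵀ)⁻¹ := by rw [hLmul]
              _ = ((L' j)⁻¹ * L' j) * ((L' j)ᵀ * ((L' j)ᵀ)⁻¹) := by noncomm_ring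
              _ = 1 := by
                  rw [Matrix.nonsing_inv_mul _ hLdet, Matrix.mul_nonsing_inv _ hLtdet,
                    Matrix.one_mul]
          refine ⟨horth, ?_⟩
          have hdet := congrArg Matrix.det horth
          rw [Matrix.det_mul, Matrix.det_one] at hdet
          exact (Matrix.isUnit_iff_isUnit_det _).mpr (IsUnit.of_mul_eq_one _ hdet)
    -- key step identity
    have hstep : ∀ j, L' j * P (j + 1) = P j * A' j := by
      intro j
      have hPA : IsUnit (P j * A' j) := (hPinv j).2.mul (hA'unit j)
      have hSpd : ((P j * A' j) * (P j * A' j)ᵀ).PosDef := posDef_mul_transpose_self hPA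
      obtain ⟨hLutpd, _⟩ := hTspec hSpd
      have hLdet : IsUnit (L' j).det :=
        (Matrix.isUnit_iff_isUnit_det _).mp (utpd_isUnit hLutpd)
      rw [hPsucc, ← Matrix.mul_assoc, Matrix.mul_nonsing_inv _ hLdet, Matrix.one_mul]
    -- telescoping product
    have hprod : ∀ m, ((List.range m).map L').prod * P m = ((List.range m).map A').prod := by
      intro m
      induction m with
      | zero => simp [hP0]
      | succ m ih =>
          rw [List.range_succ, List.map_append, List.map_append, List.prod_append,
            List.prod_append]
          simp only [List.map_cons, List.map_nil, List.prod_cons, List.prod_nil, Matrix.mul_one]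
          calc ((List.range m).map L').prod * L' m * P (m + 1)
              = ((List.range m).map L').prod * (L' m * P (m + 1)) := by rw [Matrix.mul_assoc]
            _ = ((List.range m).map L').prod * (P m * A' m) := by rw [hstep]
            _ = (((List.range m).map L').prod * P m) * A' m := by rw [Matrix.mul_assoc]
            _ = ((List.range m).map A').prod * A' m := by rw [ih]
    -- the candidate solution
    set L : Fin n → Matrix (Fin r) (Fin r) ℝ := fun j => L' j.val with hL
    have hofFnmap : ∀ (u : ℕ → Matrix (Fin r) (Fin r) ℝ),
        (List.range n).map u = List.ofFn (fun j : Fin n => u j.val) := by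
      intro u
      apply List.ext_getElem <;> simp
    have hA'prod : ((List.range n).map A').prod = 1 := by
      rw [hofFnmap]
      have : (fun j : Fin n => A' j.val) = A := by
        funext j
        simp only [hA', dif_pos j.isLt, Fin.eta]
      rw [this, hAprod]
    have hLP : (List.ofFn L).prod * P n = 1 := by
      have := hprod n
      rwa [hofFnmap L', hA'prod] at this
    have hLutpd : ∀ j : Fin n, UpperTriangularPosDiagReal (L j) := by
      intro j
      have hPA : IsUnit (P j.val * A' j.val) := (hPinv j.val).2.mul (hA'unit j.val)
      exact (hTspec (posDef_mul_transpose_self hPA)).1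
    have hprodutpd : UpperTriangularPosDiagReal (List.ofFn L).prod := by
      apply utpd_list_prod
      intro M hM
      obtain ⟨j, rfl⟩ := List.mem_ofFn.mp hM
      exact hLutpd j
    -- the product is orthogonal, hence 1
    have hPn := hPinv n
    have hPninv : (P n)⁻¹ = (List.ofFn L).prod := Matrix.inv_eq_left_inv hLP
    have hprodorth : (List.ofFn L).prod * ((List.ofFn L).prod)ᵀ = 1 := by
      rw [← hPninv, transpose_nonsing_inv, ← Matrix.mul_inv_rev]
      rw [mul_eq_one_comm.mp hPn.1]
      exact inv_one
    have hprodone : (List.ofFn L).prod = 1 := utpd_orth_eq_one hprodutpd hprodorth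
    refine ⟨L, hLutpd, hprodone, ?_⟩
    intro j
    obtain ⟨hAh, σ, hσ⟩ := hAeig j
    have hPA : IsUnit (P j.val * A' j.val) := (hPinv j.val).2.mul (hA'unit j.val)
    have hLmul := (hTspec (posDef_mul_transpose_self hPA)).2
    have hA'j : A' j.val = A j := by simp only [hA', dif_pos j.isLt, Fin.eta]
    have hconj : L j * (L j)ᵀ = P j.val * (A j * (A j)ᵀ) * (P j.val)ᵀ := by
      show L' j.val * (L' j.val)ᵀ = _
      rw [show L' (j.val : ℕ) = T (P j.val * A' j.val * (P j.val * A' j.val)ᵀ) from rfl,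
        hLmul, hA'j, transpose_mul]
      noncomm_ring
    have hBh : (L j * (L j)ᵀ).IsHermitian := isHermitian_mul_transpose
    obtain ⟨τ, hτ⟩ := eig_perm_of_conj (hPinv j.val).1 hconj hAh hBh
    refine ⟨hBh, τ.trans σ, fun k => ?_⟩
    rw [hτ k, hσ (τ k)]
    rfl
  · rintro ⟨L, hLutpd, hLprod, hLeig⟩
    exact ⟨L, fun j => utpd_isUnit (hLutpd j), hLprod, hLeig⟩
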